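/- arXiv:1605.08824 — 5 statements merged into one kernel-verified Lean document; each statement's English description precedes it below -/
import Mathlib

section
/- Let Y ~ N_n(μ, σ²I_n) be a Gaussian vector and K ⊆ ℝ^n a nonempty convex compact set. Then P(Y ∈ K) ≤ exp(-‖μ - P_K(μ)‖²/(2σ²)), where P_K(μ) is the Euclidean projection of μ onto K. -/
/-!
Let `p` be the point of `K` nearest to `μ` and `d = ‖μ - p‖`. Since `K` is convex, the angle at `p`
between `μ` and any `y ∈ K` is obtuse, so `‖y - μ‖² ≥ ‖y - p‖² + d²`. Hence on `K` the density of
`N(μ, σ²I)` is at most `exp (-d² / (2σ²))` times the density of `N(p, σ²I)`, and the latter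
integrates to at most `1` over `K`.
-/

open MeasureTheory Real RealInnerProductSpace

theorem norm_sub_sq_add_infDist_sq_le {E : Type*} [NormedAddCommGroup E] [InnerProductSpace ℝ E]
    {K : Set E} (hK : Convex ℝ K) {x p : E} (hp : p ∈ K) (hxp : Metric.infDist x K = dist x p)
    {y : E} (hy : y ∈ K) :
    ‖y - p‖ ^ 2 + Metric.infDist x K ^ 2 ≤ ‖y - x‖ ^ 2 := by
  have hmin : ‖x - p‖ = ⨅ w : K, ‖x - w‖ := by
    rw [← dist_eq_norm, ← hxp, Metric.infDist_eq_iInf]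
    simp_rw [dist_eq_norm]
  have hobtuse : ⟪y - p, x - p⟫ ≤ 0 := by
    rw [real_inner_comm]
    exact (norm_eq_iInf_iff_real_inner_le_zero hK hp).mp hmin y hy
  rw [hxp, dist_eq_norm, show y - x = (y - p) - (x - p) by abel,
    norm_sub_sq_real (y - p)]
  linarith

noncomputable def gaussianDensity {n : ℕ} (σ : ℝ) (m y : EuclideanSpace ℝ (Fin n)) : ℝ :=
  (2 * π * σ ^ 2) ^ (-(n : ℝ) / 2) * exp (-‖y - m‖ ^ 2 / (2 * σ ^ 2))

section GaussianDensity

variable {n : ℕ} {σ : ℝ}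

theorem gaussianDensity_nonneg (m y : EuclideanSpace ℝ (Fin n)) : 0 ≤ gaussianDensity σ m y :=
  mul_nonneg (rpow_nonneg (by positivity) _) (exp_pos _).le

theorem integral_gaussianDensity (hσ : σ ≠ 0) (m : EuclideanSpace ℝ (Fin n)) :
    ∫ y, gaussianDensity σ m y = 1 := by
  have hb : 0 < 1 / (2 * σ ^ 2) := by positivity
  have hexp : ∀ v : EuclideanSpace ℝ (Fin n),
      exp (-‖v‖ ^ 2 / (2 * σ ^ 2)) = exp (-(1 / (2 * σ ^ 2)) * ‖v‖ ^ 2) := fun v => by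
    congr 1; ring
  unfold gaussianDensity
  rw [integral_const_mul,
    integral_sub_right_eq_self (fun v => exp (-‖v‖ ^ 2 / (2 * σ ^ 2))) m]
  simp_rw [hexp]
  rw [GaussianFourier.integral_rexp_neg_mul_sq_norm hb, finrank_euclideanSpace_fin,
    show π / (1 / (2 * σ ^ 2)) = 2 * π * σ ^ 2 by field_simp, ← rpow_add (by positivity),
    neg_div, neg_add_cancel, rpow_zero]

theorem lintegral_ofReal_gaussianDensity (hσ : σ ≠ 0) (m : EuclideanSpace ℝ (Fin n)) :
    ∫⁻ y, ENNReal.ofReal (gaussianDensity σ m y) = 1 := by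
  have hint : Integrable (gaussianDensity σ m) :=
    Integrable.of_integral_ne_zero (by rw [integral_gaussianDensity hσ]; exact one_ne_zero)
  rw [← ofReal_integral_eq_lintegral_ofReal hint
    (Filter.Eventually.of_forall (gaussianDensity_nonneg m)), integral_gaussianDensity hσ,
    ENNReal.ofReal_one]

theorem gaussianDensity_le_exp_mul_gaussianDensity {m p y : EuclideanSpace ℝ (Fin n)} {d : ℝ}
    (h : ‖y - p‖ ^ 2 + d ^ 2 ≤ ‖y - m‖ ^ 2) :
    gaussianDensity σ m y ≤ exp (-d ^ 2 / (2 * σ ^ 2)) * gaussianDensity σ p y := by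
  unfold gaussianDensity
  rw [mul_left_comm, ← exp_add]
  gcongr
  rw [← add_div]
  gcongr
  linarith

end GaussianDensity

/-- Chernoff approximation: for `Y ~ N_n(μ, σ² I)` and a nonempty convex compact set `K`,
`P(Y ∈ K) ≤ exp(-‖μ - P_K(μ)‖² / (2σ²))`, where `‖μ - P_K(μ)‖ = infDist μ K`. -/
theorem stmt1 {n : ℕ} (μ : EuclideanSpace ℝ (Fin n)) (σ : ℝ) (hσ : 0 < σ)
    (K : Set (EuclideanSpace ℝ (Fin n))) (hK : Convex ℝ K) (hKc : IsCompact K)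
    (hKne : K.Nonempty) :
    ((volume.withDensity (fun y => ENNReal.ofReal
        ((2 * Real.pi * σ ^ 2) ^ (-(n : ℝ) / 2) *
          Real.exp (-‖y - μ‖ ^ 2 / (2 * σ ^ 2))))) K).toReal
      ≤ Real.exp (-(Metric.infDist μ K) ^ 2 / (2 * σ ^ 2)) := by
  obtain ⟨p, hpK, hp⟩ := hKc.exists_infDist_eq_dist hKne μ
  set e := exp (-(Metric.infDist μ K) ^ 2 / (2 * σ ^ 2))
  change (volume.withDensity (fun y => ENNReal.ofReal (gaussianDensity σ μ y)) K).toReal ≤ e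
  rw [withDensity_apply _ hKc.measurableSet]
  refine ENNReal.toReal_le_of_le_ofReal (exp_pos _).le ?_
  calc ∫⁻ y in K, ENNReal.ofReal (gaussianDensity σ μ y)
      ≤ ∫⁻ y in K, ENNReal.ofReal e * ENNReal.ofReal (gaussianDensity σ p y) := by
        refine setLIntegral_mono' hKc.measurableSet fun y hy => ?_
        rw [← ENNReal.ofReal_mul (exp_pos _).le]
        exact ENNReal.ofReal_le_ofReal <| gaussianDensity_le_exp_mul_gaussianDensity <|
          norm_sub_sq_add_infDist_sq_le hK hpK hp hy
    _ = ENNReal.ofReal e * ∫⁻ y in K, ENNReal.ofReal (gaussianDensity σ p y) :=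
        lintegral_const_mul' _ _ ENNReal.ofReal_ne_top
    _ ≤ ENNReal.ofReal e * ∫⁻ y, ENNReal.ofReal (gaussianDensity σ p y) := by
        gcongr
        exact Measure.restrict_le_self
    _ = ENNReal.ofReal e := by rw [lintegral_ofReal_gaussianDensity hσ.ne', mul_one]
end

section
/- Let π: ℝ^k → (0,∞) be log-concave, X* ∈ ℝ^{n×k}, y ∈ ℝ^n, and w: ℝ^n → [0,∞] nonnegative with h(μ) = inf_z { ½‖μ-z‖² + w(z) }. Then the objective β* ↦ ½‖y - X*β*‖² - h(X*β*) - log π(β*) is a convex function of β* ∈ ℝ^k. -/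
/-!
Expanding both squares, `½‖y - μ‖² - (½‖μ - z‖² + w z) = ⟪μ, z - y⟫ + ½‖y‖² - ½‖z‖² - w z` is
affine in `μ` for every `z`. Hence `½‖y - μ‖² - h μ` is the pointwise supremum over `z` of affine
functions of `μ` (a convex conjugate), so it is convex, and so is its composition with `X*`.
Adding the convex function `-log π` gives the claim.
-/

open Set

noncomputable def moreauEnvelope {E : Type*} [NormedAddCommGroup E] (w : E → ℝ) (μ : E) : ℝ :=
  ⨅ z, (1 / 2 * ‖μ - z‖ ^ 2 + w z)

theorem ConvexOn.sub_ciInf {E ι : Type*} [AddCommMonoid E] [SMul ℝ E] [Nonempty ι] {s : Set E}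
    {g : E → ℝ} {F : ι → E → ℝ} (hf : ∀ i, ConvexOn ℝ s fun x => g x - F i x)
    (hbdd : ∀ x ∈ s, BddBelow (range fun i => F i x)) :
    ConvexOn ℝ s fun x => g x - ⨅ i, F i x := by
  refine ⟨(hf (Classical.arbitrary ι)).1, fun x hx y hy a b ha hb hab => ?_⟩
  simp only [smul_eq_mul]
  have hle : ∀ i, g (a • x + b • y) - a * (g x - ⨅ i, F i x) - b * (g y - ⨅ i, F i y)
      ≤ F i (a • x + b • y) := by
    intro i
    have hi := (hf i).2 hx hy ha hb hab
    simp only [smul_eq_mul] at hi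
    nlinarith [mul_le_mul_of_nonneg_left (ciInf_le (hbdd x hx) i) ha,
      mul_le_mul_of_nonneg_left (ciInf_le (hbdd y hy) i) hb]
  linarith [le_ciInf hle]

theorem convexOn_half_norm_sub_sq_sub_moreauEnvelope {E : Type*} [NormedAddCommGroup E]
    [InnerProductSpace ℝ E] {w : E → ℝ} (hw : BddBelow (range w)) (y : E) :
    ConvexOn ℝ univ fun μ => 1 / 2 * ‖y - μ‖ ^ 2 - moreauEnvelope w μ := by
  obtain ⟨m, hm⟩ := hw
  refine ConvexOn.sub_ciInf (fun z => ?_) fun μ _ => ⟨m, ?_⟩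
  · have hlin := (innerₗ E (z - y)).convexOn (convex_univ (𝕜 := ℝ))
    refine (hlin.add_const (1 / 2 * ‖y‖ ^ 2 - 1 / 2 * ‖z‖ ^ 2 - w z)).congr fun μ _ => ?_
    simp only [Pi.add_apply, innerₗ_apply_apply, norm_sub_sq_real, inner_sub_left,
      real_inner_comm μ y, real_inner_comm μ z]
    ring
  · rintro _ ⟨z, rfl⟩
    exact le_add_of_nonneg_of_le (by positivity) (hm ⟨z, rfl⟩)

theorem stmt4_general {n k : ℕ} (π : EuclideanSpace ℝ (Fin k) → ℝ)
    (hlc : ConcaveOn ℝ Set.univ (fun b => Real.log (π b)))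
    (X : EuclideanSpace ℝ (Fin k) →ₗ[ℝ] EuclideanSpace ℝ (Fin n))
    (y : EuclideanSpace ℝ (Fin n))
    (w : EuclideanSpace ℝ (Fin n) → ℝ) (hw : ∀ z, 0 ≤ w z) :
    ConvexOn ℝ Set.univ
      (fun β => (1 / 2) * ‖y - X β‖ ^ 2
        - (⨅ z, ((1 / 2) * ‖X β - z‖ ^ 2 + w z)) - Real.log (π β)) := by
  have hw_bdd : BddBelow (range w) := ⟨0, forall_mem_range.2 hw⟩
  have hquad := (convexOn_half_norm_sub_sq_sub_moreauEnvelope hw_bdd y).comp_linearMap X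
  exact (hquad.add hlc.neg).congr fun β _ => by
    simp only [Pi.add_apply, Function.comp_apply, Pi.neg_apply, moreauEnvelope]
    ring

/-- Convexity of the negative log of the approximate selection-adjusted posterior:
for a log-concave positive prior `π`, a linear map `X*` and a nonnegative `w` with
`h(μ) = inf_z (½‖μ-z‖² + w z)`, the map
`β ↦ ½‖y - X*β‖² - h(X*β) - log π(β)` is convex. -/
theorem stmt4 {n k : ℕ} (π : EuclideanSpace ℝ (Fin k) → ℝ) (hπ : ∀ b, 0 < π b)
    (hlc : ConcaveOn ℝ Set.univ (fun b => Real.log (π b)))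
    (X : EuclideanSpace ℝ (Fin k) →ₗ[ℝ] EuclideanSpace ℝ (Fin n))
    (y : EuclideanSpace ℝ (Fin n))
    (w : EuclideanSpace ℝ (Fin n) → ℝ) (hw : ∀ z, 0 ≤ w z) :
    ConvexOn ℝ Set.univ
      (fun β => (1 / 2) * ‖y - X β‖ ^ 2
        - (⨅ z, ((1 / 2) * ‖X β - z‖ ^ 2 + w z)) - Real.log (π β)) :=
  stmt4_general π hlc X y w hw
end

section
/- Let Y₁,…,Yₙ be i.i.d. N(β*,1) with β* = -δ < 0, and consider the (nonrandomized) approximate selective MLE β̂*_n = Ȳ_n - 1/(√n Ȳ_n(√n Ȳ_n + 1)) conditional on {√n Ȳ_n > 0}. Then β̂*_n does not converge in probability to β* under the conditional (selective) law; in fact, liminf_n P(|β̂*_n - β*| > δ/2 | √n Ȳ_n > 0) > 0. -/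
open MeasureTheory ProbabilityTheory Filter Real Set
open scoped NNReal Topology

/-! Under `N(-δ, 1/n)` the Gaussian density satisfies `φ(x + t) ≤ e^{-δ n t} φ(x)` for `x ≥ 0`, so
given `Ȳ > 0` the mass of `[t, ∞)` with `t = c/√n` is at most `e^{-δ c √n}`: the selected sample
mean sits in `(0, c/√n)` with conditional probability tending to one. There `√n Ȳ < c`, so the
correction `1/(√n Ȳ (√n Ȳ + 1)) > 1/(2c)` drives the estimator below `-3δ/2` once
`c = 1/(3δ + 3)`. Hence `P(|β̂*_n - β*| > δ/2 | √n Ȳ_n > 0) → 1`. -/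

lemma measureReal_gaussianReal_Ioi_pos (m : ℝ) {v : ℝ≥0} (hv : v ≠ 0) (a : ℝ) :
    0 < (gaussianReal m v).real (Ioi a) := by
  refine ENNReal.toReal_pos (fun h => ?_) (measure_ne_top _ _)
  simpa using gaussianReal_absolutelyContinuous' m hv h

lemma gaussianPDFReal_add_le {m t x : ℝ} {v : ℝ≥0} (ht : 0 ≤ t) (hx : 0 ≤ x) :
    gaussianPDFReal m v (x + t) ≤ exp (m * t / v) * gaussianPDFReal m v x := by
  simp only [gaussianPDFReal, mul_left_comm (exp _), ← exp_add]
  gcongr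
  rw [← mul_div_mul_left (m * t) _ two_ne_zero, ← add_div]
  gcongr
  nlinarith

lemma measureReal_gaussianReal_Ici_le {m t : ℝ} {v : ℝ≥0} (ht : 0 ≤ t) (hv : v ≠ 0) :
    (gaussianReal m v).real (Ici t) ≤ exp (m * t / v) * (gaussianReal m v).real (Ioi 0) := by
  have hshift : gaussianReal m v (Ici t) = gaussianReal (m - t) v (Ici 0) := by
    rw [← sub_add_cancel m t, ← gaussianReal_map_add_const t,
      Measure.map_apply (measurable_add_const t) measurableSet_Ici, add_sub_cancel_right,
      preimage_add_const_Ici, sub_self]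
  have := nullSingletonClass_gaussianReal (μ := m) hv
  rw [measureReal_def, measureReal_def, measure_congr Ioi_ae_eq_Ici,
    ← ENNReal.toReal_ofReal (exp_pos _).le, ← ENNReal.toReal_mul]
  refine ENNReal.toReal_mono (by finiteness) ?_
  rw [hshift, gaussianReal_apply _ hv, gaussianReal_apply _ hv,
    ← lintegral_const_mul _ (measurable_gaussianPDF _ _)]
  refine setLIntegral_mono (by fun_prop) fun x hx => ?_
  rw [gaussianPDF, gaussianPDF, ← gaussianPDFReal_add, ← ENNReal.ofReal_mul (exp_pos _).le]
  exact ENNReal.ofReal_le_ofReal (gaussianPDFReal_add_le ht hx)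

lemma one_sub_exp_le_gaussianReal_cond_Ioo {m t : ℝ} {v : ℝ≥0} (ht : 0 < t) (hv : v ≠ 0) :
    1 - exp (m * t / v) ≤ (gaussianReal m v)[|Ioi 0].real (Ioo 0 t) := by
  set μ := gaussianReal m v
  have hpos := measureReal_gaussianReal_Ioi_pos m hv 0
  have hsplit : μ.real (Ioo 0 t) = μ.real (Ioi 0) - μ.real (Ici t) := by
    rw [← Ioi_sdiff_Ici, measureReal_sdiff (Ici_subset_Ioi.2 ht) measurableSet_Ici]
  rw [measureReal_def, cond_apply measurableSet_Ioi, ENNReal.toReal_mul, ENNReal.toReal_inv,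
    Ioi_inter_Ioo, max_self, ← measureReal_def, ← measureReal_def, hsplit, le_inv_mul_iff₀ hpos]
  nlinarith [measureReal_gaussianReal_Ici_le (m := m) ht.le hv]

noncomputable def approxSelectiveMLE (n : ℕ) (y : ℝ) : ℝ := y - 1 / ((√n * y) * (√n * y + 1))

lemma approxSelectiveMLE_lt {n : ℕ} {y c : ℝ} (hn : 1 ≤ n) (hy : 0 < y) (hc : c ≤ 1)
    (hyc : √n * y < c) : approxSelectiveMLE n y < c - 1 / (2 * c) := by
  have hsqrt : 1 ≤ √(n : ℝ) := one_le_sqrt.2 (by exact_mod_cast hn)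
  set s := √n * y
  have hs : 0 < s := by positivity
  have hys : y ≤ s := le_mul_of_one_le_left hy.le hsqrt
  have hden : s * (s + 1) < 2 * c := by nlinarith
  have : 1 / (2 * c) < 1 / (s * (s + 1)) := one_div_lt_one_div_of_lt (by positivity) hden
  unfold approxSelectiveMLE
  linarith

lemma tendsto_one_sub_exp_neg_mul_sqrt {a : ℝ} (ha : 0 < a) :
    Tendsto (fun n : ℕ => 1 - exp (-(a * √n))) atTop (𝓝 1) := by
  have h : Tendsto (fun n : ℕ => a * √n) atTop atTop :=
    (tendsto_sqrt_atTop.comp tendsto_natCast_atTop_atTop).const_mul_atTop ha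
  simpa using (tendsto_exp_atBot.comp (tendsto_neg_atTop_atBot.comp h)).const_sub 1

lemma tendsto_gaussianReal_cond_approxSelectiveMLE_far {δ : ℝ} (hδ : 0 < δ) :
    Tendsto (fun n : ℕ => ((gaussianReal (-δ) (1 / (n : ℝ≥0)))[|{y | 0 < √n * y}]).real
      {y | δ / 2 < |approxSelectiveMLE n y - -δ|}) atTop (𝓝 1) := by
  set c := (3 * δ + 3)⁻¹
  have hc : 0 < c := by positivity
  have hc1 : c ≤ 1 := inv_le_one_of_one_le₀ (by linarith)
  refine tendsto_of_tendsto_of_tendsto_of_le_of_le' (tendsto_one_sub_exp_neg_mul_sqrt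
    (mul_pos hδ hc)) tendsto_const_nhds ?_ (Eventually.of_forall fun n => measureReal_le_one)
  filter_upwards [eventually_ge_atTop 1] with n hn
  have hsqrt : 0 < √(n : ℝ) := sqrt_pos.2 (by exact_mod_cast hn)
  have hv : (1 / (n : ℝ≥0)) ≠ 0 := one_div_ne_zero (by exact_mod_cast (by omega : n ≠ 0))
  have hsel : {y : ℝ | 0 < √n * y} = Ioi 0 := by ext; simp [mul_pos_iff_of_pos_left hsqrt]
  have hrate : -δ * (c / √n) / ((1 / (n : ℝ≥0) : ℝ≥0) : ℝ) = -(δ * c * √n) := by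
    push_cast
    field_simp
    rw [sq_sqrt n.cast_nonneg]
  have hfar : Ioo 0 (c / √n) ⊆ {y | δ / 2 < |approxSelectiveMLE n y - -δ|} := by
    intro y ⟨hy, hyc⟩
    have hlt := approxSelectiveMLE_lt hn hy hc1 ((lt_div_iff₀' hsqrt).1 hyc)
    have hc' : 1 / (2 * c) = (3 * δ + 3) / 2 := by simp only [c, one_div, mul_inv, inv_inv]; ring
    show δ / 2 < |approxSelectiveMLE n y - -δ|
    rw [lt_abs]
    right
    linarith
  calc 1 - exp (-(δ * c * √n))
      ≤ ((gaussianReal (-δ) (1 / (n : ℝ≥0)))[|Ioi 0]).real (Ioo 0 (c / √n)) := by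
        rw [← hrate]; exact one_sub_exp_le_gaussianReal_cond_Ioo (by positivity) hv
    _ ≤ _ := by rw [← hsel]; exact measureReal_mono hfar

/-- Inconsistency of the nonrandomized approximate selective MLE: if `Ȳ_n ~ N(β*, 1/n)`
with `β* = -δ < 0`, and `β̂*_n = Ȳ_n - 1/(√n Ȳ_n (√n Ȳ_n + 1))`, then conditionally on
`{√n Ȳ_n > 0}`, `liminf_n P(|β̂*_n - β*| > δ/2 | √n Ȳ_n > 0) > 0`, so `β̂*_n` is not
consistent for `β*` under the selective law. -/
theorem stmt10 (δ : ℝ) (hδ : 0 < δ) (β : ℝ) (hβ : β = -δ) :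
    0 < Filter.liminf (fun n : ℕ =>
      (((gaussianReal β (1 / (n : NNReal)))[|{y : ℝ | 0 < Real.sqrt n * y}])
        {y : ℝ | δ / 2 <
          |(y - 1 / ((Real.sqrt n * y) * (Real.sqrt n * y + 1))) - β|}).toReal)
      Filter.atTop := by
  subst hβ
  exact one_pos.trans_eq (tendsto_gaussianReal_cond_approxSelectiveMLE_far hδ).liminf_eq.symm
end

section
/- Let Y₁,…,Yₙ be i.i.d. real random variables with log-MGF Λ(η) = log E[exp(ηY₁)] finite for all η, and let x be a point with Λ*(x) = sup_η (ηx - Λ(η)) attained at η*. Then for any δ > 0, liminf_n (1/n) log P(|Ȳ_n - x| ≤ δ) ≥ -Λ*(x). -/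
/-!
Tilt `μ` exponentially by `η₀`. Because `η₀` maximises `η x - Λ η`, the derivative `Λ'(η₀)`, which
is the mean of the tilted law, equals `x`; and since every exponential moment of `μ` is finite,
the tilted law has finite variance. On the product space the tilted law has density
`exp (η₀ ∑ ωᵢ - n Λ(η₀))` with respect to `μ^⊗n`, and this density is at most
`exp (n (η₀ x - Λ(η₀) + |η₀| ε))` on the event `|Ȳₙ - x| ≤ ε`. By Chebyshev's inequality the
tilted probability of that event tends to `1`, hence
`liminf (1/n) log P(|Ȳₙ - x| ≤ δ) ≥ -(η₀ x - Λ(η₀) + |η₀| ε)` for every `0 < ε ≤ δ`;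
let `ε → 0`.
-/

open MeasureTheory Filter ProbabilityTheory Real
open scoped ENNReal Topology

theorem MeasureTheory.Measure.pi_withDensity {ι : Type*} [Fintype ι] {α : ι → Type*}
    [∀ i, MeasurableSpace (α i)] (μ : ∀ i, Measure (α i)) [∀ i, IsProbabilityMeasure (μ i)]
    {f : ∀ i, α i → ℝ≥0∞} (hf : ∀ i, Measurable (f i))
    [∀ i, SigmaFinite ((μ i).withDensity (f i))] :
    Measure.pi (fun i ↦ (μ i).withDensity (f i))
      = (Measure.pi μ).withDensity (fun ω ↦ ∏ i, f i (ω i)) := by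
  refine Measure.pi_eq fun s hs ↦ ?_
  have hbox : (Set.univ.pi s).indicator (fun ω ↦ ∏ i, f i (ω i))
      = fun ω ↦ ∏ i, (s i).indicator (f i) (ω i) := by
    ext ω
    by_cases hω : ω ∈ Set.univ.pi s
    · rw [Set.indicator_of_mem hω]
      exact Finset.prod_congr rfl fun i _ ↦ (Set.indicator_of_mem (hω i (Set.mem_univ i)) _).symm
    · obtain ⟨i, hi⟩ : ∃ i, ω i ∉ s i := by simpa [Set.mem_univ_pi] using hω
      rw [Set.indicator_of_notMem hω]
      exact (Finset.prod_eq_zero (Finset.mem_univ i) (Set.indicator_of_notMem hi _)).symm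
  rw [withDensity_apply _ (MeasurableSet.univ_pi hs),
    ← lintegral_indicator (MeasurableSet.univ_pi hs), hbox, lintegral_prod_eq_prod_lintegral_of_indepFun _ _
      (iIndepFun_pi fun i ↦ ((hf i).indicator (hs i)).aemeasurable)
      fun i ↦ ((hf i).indicator (hs i)).comp (measurable_pi_apply i)]
  refine Finset.prod_congr rfl fun i _ ↦ ?_
  rw [(measurePreserving_eval μ i).lintegral_comp ((hf i).indicator (hs i)),
    lintegral_indicator (hs i), withDensity_apply _ (hs i)]

lemma measureReal_pi_lt_abs_sum_div_sub_le (ν : Measure ℝ) [IsProbabilityMeasure ν]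
    (hν : MemLp id 2 ν) {n : ℕ} (hn : 0 < n) {ε : ℝ} (hε : 0 < ε) :
    (Measure.pi fun _ : Fin n ↦ ν).real {ω | ε < |(∑ i, ω i) / n - ∫ y, y ∂ν|}
      ≤ Var[id; ν] / (n * ε ^ 2) := by
  set P := Measure.pi fun _ : Fin n ↦ ν
  have hn' : (0 : ℝ) < n := Nat.cast_pos.mpr hn
  have hcoord : ∀ i : Fin n, MemLp (fun ω : Fin n → ℝ ↦ ω i) 2 P := fun i ↦
    hν.comp_measurePreserving (measurePreserving_eval _ i)
  have hS : MemLp (∑ i, fun ω : Fin n → ℝ ↦ ω i) 2 P := memLp_finsetSum' _ fun i _ ↦ hcoord i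
  have hmean : P[∑ i, fun ω : Fin n → ℝ ↦ ω i] = n * ∫ y, y ∂ν := by
    simp only [Finset.sum_apply]
    rw [integral_finsetSum _ fun i _ ↦ (hcoord i).integrable one_le_two, Finset.sum_congr rfl fun i _ ↦
      integral_comp_eval (μ := fun _ : Fin n ↦ ν) (i := i) (f := fun y : ℝ ↦ y)
        aestronglyMeasurable_id]
    simp
  have hvar : Var[∑ i, fun ω : Fin n → ℝ ↦ ω i; P] = n * Var[id; ν] := by
    simpa using variance_sum_pi (μ := fun _ : Fin n ↦ ν) (X := fun _ ↦ id) fun _ ↦ hν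
  have hcheb := meas_ge_le_variance_div_sq hS (mul_pos hn' hε)
  rw [hmean, hvar] at hcheb
  calc P.real {ω | ε < |(∑ i, ω i) / n - ∫ y, y ∂ν|}
      ≤ P.real {ω | n * ε ≤ |(∑ i, fun ω : Fin n → ℝ ↦ ω i) ω - n * ∫ y, y ∂ν|} := by
        refine measureReal_mono fun ω hω ↦ ?_
        have : (∑ i, fun ω : Fin n → ℝ ↦ ω i) ω - n * ∫ y, y ∂ν
            = n * ((∑ i, ω i) / n - ∫ y, y ∂ν) := by
          simp only [Finset.sum_apply]; field_simp
        simp only [Set.mem_ofPred_eq, this, abs_mul, Nat.abs_cast] at hω ⊢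
        exact mul_le_mul_of_nonneg_left hω.le hn'.le
    _ ≤ n * Var[id; ν] / (n * ε) ^ 2 :=
        ENNReal.toReal_le_of_le_ofReal
          (div_nonneg (mul_nonneg hn'.le (variance_nonneg _ _)) (sq_nonneg _)) hcheb
    _ = Var[id; ν] / (n * ε ^ 2) := by field_simp

lemma tendsto_measureReal_pi_abs_sum_div_sub_le (ν : Measure ℝ) [IsProbabilityMeasure ν]
    (hν : MemLp id 2 ν) {ε : ℝ} (hε : 0 < ε) :
    Tendsto (fun n : ℕ ↦ (Measure.pi fun _ : Fin n ↦ ν).real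
      {ω | |(∑ i, ω i) / n - ∫ y, y ∂ν| ≤ ε}) atTop (𝓝 1) := by
  have hlower : Tendsto (fun n : ℕ ↦ 1 - Var[id; ν] / ε ^ 2 / n) atTop (𝓝 1) := by
    simpa using tendsto_const_nhds.sub (tendsto_const_div_atTop_nhds_zero_nat (Var[id; ν] / ε ^ 2))
  refine tendsto_of_tendsto_of_tendsto_of_le_of_le' hlower tendsto_const_nhds ?_
    (Eventually.of_forall fun n ↦ measureReal_le_one)
  filter_upwards [eventually_gt_atTop 0] with n hn
  have hmeas : MeasurableSet {ω : Fin n → ℝ | |(∑ i, ω i) / n - ∫ y, y ∂ν| ≤ ε} :=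
    measurableSet_le (by fun_prop) measurable_const
  have hcompl := probReal_compl_eq_one_sub (μ := Measure.pi fun _ : Fin n ↦ ν) hmeas
  have hcheb := measureReal_pi_lt_abs_sum_div_sub_le ν hν hn hε
  simp only [Set.compl_ofPred, not_le] at hcompl
  rw [div_div, mul_comm (ε ^ 2)]
  linarith

lemma integral_tilted_mul_self_eq_of_isLocalMax {Ω : Type*} {mΩ : MeasurableSpace Ω}
    {μ : Measure Ω} {X : Ω → ℝ} {t x : ℝ} (ht : t ∈ interior (integrableExpSet X μ))
    (hmax : IsLocalMax (fun s ↦ s * x - cgf X μ s) t) :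
    (μ.tilted (t * X ·))[X] = x := by
  have hderiv : HasDerivAt (fun s ↦ s * x - cgf X μ s) (x - deriv (cgf X μ) t) t :=
    (hasDerivAt_mul_const x).sub (analyticAt_cgf ht).differentiableAt.hasDerivAt
  rw [integral_tilted_mul_self ht]
  linarith [hmax.hasDerivAt_eq_zero hderiv]

lemma measureReal_pi_tilted_le {ι : Type*} [Fintype ι] (μ : Measure ℝ) [IsProbabilityMeasure μ]
    {t : ℝ} (ht : Integrable (fun y ↦ exp (t * y)) μ) {A : Set (ι → ℝ)} (hA : MeasurableSet A)
    {C : ℝ} (hC : ∀ ω ∈ A, t * ∑ i, ω i ≤ C) :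
    (Measure.pi fun _ ↦ μ.tilted (t * ·)).real A
      ≤ exp (C - Fintype.card ι * cgf id μ t) * (Measure.pi fun _ ↦ μ).real A := by
  set density : ℝ → ℝ≥0∞ := fun y ↦ ENNReal.ofReal (exp (t * y) / ∫ z, exp (t * z) ∂μ)
  have : IsProbabilityMeasure (μ.withDensity density) := isProbabilityMeasure_tilted ht
  have hpi : Measure.pi (fun _ : ι ↦ μ.tilted (t * ·))
      = (Measure.pi fun _ ↦ μ).withDensity (fun ω ↦ ∏ i, density (ω i)) :=
    Measure.pi_withDensity _ fun _ ↦ by fun_prop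
  have hbound : ∀ ω ∈ A,
      ∏ i, density (ω i) ≤ ENNReal.ofReal (exp (C - Fintype.card ι * cgf id μ t)) := by
    intro ω hω
    have hdens : ∀ y, exp (t * y) / ∫ z, exp (t * z) ∂μ = exp (t * y - cgf id μ t) := fun y ↦ by
      rw [exp_sub, exp_cgf (X := id) ht]; rfl
    rw [← ENNReal.ofReal_prod_of_nonneg fun i _ ↦ by positivity]
    refine ENNReal.ofReal_le_ofReal ?_
    simp only [hdens, ← exp_sum, Finset.sum_sub_distrib, ← Finset.mul_sum, Finset.sum_const,
      Finset.card_univ, nsmul_eq_mul]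
    exact exp_le_exp.mpr (by linarith [hC ω hω])
  rw [hpi, measureReal_def, withDensity_apply _ hA, measureReal_def,
    ← ENNReal.toReal_ofReal (exp_pos _).le, ← ENNReal.toReal_mul]
  refine ENNReal.toReal_mono (ENNReal.mul_ne_top ENNReal.ofReal_ne_top (measure_ne_top _ _)) ?_
  calc ∫⁻ ω in A, ∏ i, density (ω i) ∂(Measure.pi fun _ ↦ μ)
      ≤ ∫⁻ _ in A, ENNReal.ofReal (exp (C - Fintype.card ι * cgf id μ t)) ∂(Measure.pi fun _ ↦ μ) :=
        setLIntegral_mono measurable_const hbound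
    _ = _ := setLIntegral_const A _

lemma measureReal_pi_tilted_abs_sum_div_sub_le (μ : Measure ℝ) [IsProbabilityMeasure μ]
    {t : ℝ} (ht : Integrable (fun y ↦ exp (t * y)) μ) (n : ℕ) (x ε : ℝ) :
    (Measure.pi fun _ : Fin n ↦ μ.tilted (t * ·)).real {ω | |(∑ i, ω i) / n - x| ≤ ε}
      ≤ exp (n * (t * x - cgf id μ t + |t| * ε)) *
        (Measure.pi fun _ : Fin n ↦ μ).real {ω | |(∑ i, ω i) / n - x| ≤ ε} := by
  have hC : ∀ ω ∈ {ω : Fin n → ℝ | |(∑ i, ω i) / n - x| ≤ ε},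
      t * ∑ i, ω i ≤ n * (t * x + |t| * ε) := fun ω hω ↦ by
    rcases n.eq_zero_or_pos with rfl | hn
    · simp
    have hdev : t * ((∑ i, ω i) / n - x) ≤ |t| * ε := calc
      _ ≤ |t| * |(∑ i, ω i) / n - x| := (le_abs_self _).trans (abs_mul _ _).le
      _ ≤ |t| * ε := mul_le_mul_of_nonneg_left hω (abs_nonneg t)
    calc t * ∑ i, ω i = n * (t * x + t * ((∑ i, ω i) / n - x)) := by field_simp; ring
      _ ≤ n * (t * x + |t| * ε) := by gcongr
  convert measureReal_pi_tilted_le μ ht (measurableSet_le (by fun_prop) measurable_const) hC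
    using 3
  rw [Fintype.card_fin]
  ring

lemma neg_add_le_liminf_log_measureReal_pi (μ : Measure ℝ) [IsProbabilityMeasure μ]
    (hmgf : ∀ t, Integrable (fun y ↦ exp (t * y)) μ) {x t : ℝ}
    (hmax : ∀ s, s * x - cgf id μ s ≤ t * x - cgf id μ t) {ε δ : ℝ} (hε : 0 < ε) (hεδ : ε ≤ δ) :
    -(t * x - cgf id μ t + |t| * ε) ≤ liminf (fun n : ℕ ↦ 1 / (n : ℝ) *
      log ((Measure.pi fun _ : Fin n ↦ μ).real {ω | |(∑ i, ω i) / n - x| ≤ δ})) atTop := by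
  set c := t * x - cgf id μ t + |t| * ε
  set tiltedProb : ℕ → ℝ := fun n ↦ (Measure.pi fun _ : Fin n ↦ μ.tilted (t * ·)).real
    {ω | |(∑ i, ω i) / n - x| ≤ ε}
  have : IsProbabilityMeasure (μ.tilted (t * ·)) := isProbabilityMeasure_tilted (hmgf t)
  have ht : t ∈ interior (integrableExpSet id μ) := by simp [integrableExpSet, hmgf]
  have hmean : ∫ y, y ∂(μ.tilted (t * ·)) = x :=
    integral_tilted_mul_self_eq_of_isLocalMax (X := id) ht (Eventually.of_forall hmax)
  have hLLN : Tendsto tiltedProb atTop (𝓝 1) := by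
    simpa only [hmean] using
      tendsto_measureReal_pi_abs_sum_div_sub_le (μ.tilted (t * ·)) (memLp_tilted_mul ht 2) hε
  have hlower : Tendsto (fun n : ℕ ↦ -c + 1 / (n : ℝ) * log (tiltedProb n)) atTop (𝓝 (-c)) := by
    simpa using tendsto_const_nhds.add (tendsto_one_div_atTop_nhds_zero_nat.mul
      ((continuousAt_log one_ne_zero).tendsto.comp hLLN))
  have hev : ∀ᶠ n : ℕ in atTop, -c + 1 / (n : ℝ) * log (tiltedProb n) ≤ 1 / (n : ℝ) *
      log ((Measure.pi fun _ : Fin n ↦ μ).real {ω | |(∑ i, ω i) / n - x| ≤ δ}) := by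
    filter_upwards [eventually_gt_atTop 0, hLLN.eventually (lt_mem_nhds one_pos)] with n hn hpos
    set p := (Measure.pi fun _ : Fin n ↦ μ).real {ω | |(∑ i, ω i) / n - x| ≤ δ}
    have hbound : tiltedProb n ≤ exp (n * c) * p :=
      (measureReal_pi_tilted_abs_sum_div_sub_le μ (hmgf t) n x ε).trans
        (by gcongr; exact measureReal_mono fun ω hω ↦ le_trans hω hεδ)
    have hp : 0 < p := pos_of_mul_pos_right (hpos.trans_le hbound) (exp_pos _).le
    have hlog : log (tiltedProb n) ≤ n * c + log p := calc
      log (tiltedProb n) ≤ log (exp (n * c) * p) := log_le_log hpos hbound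
      _ = n * c + log p := by rw [log_mul (exp_pos _).ne' hp.ne', log_exp]
    calc -c + 1 / (n : ℝ) * log (tiltedProb n) ≤ -c + 1 / (n : ℝ) * (n * c + log p) := by gcongr
      _ = 1 / (n : ℝ) * log p := by field_simp; ring
  rw [← hlower.liminf_eq]
  exact liminf_le_liminf hev hlower.isBoundedUnder_ge (isCoboundedUnder_ge_of_le atTop (x := 0)
    fun n ↦ mul_nonpos_of_nonneg_of_nonpos (by positivity)
      (log_nonpos measureReal_nonneg measureReal_le_one))

/-- Cramér lower bound: for i.i.d. real variables with everywhere-finite log-MGF `Λ`, and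
a point `x` at which the Legendre transform `Λ*(x) = sup_η (ηx - Λ η)` is attained at `η₀`,
for every `δ > 0` one has `liminf_n (1/n) log P(|Ȳ_n - x| ≤ δ) ≥ -Λ*(x)`. -/
theorem stmt13 (μ : Measure ℝ) [IsProbabilityMeasure μ]
    (hmgf : ∀ η : ℝ, Integrable (fun y => Real.exp (η * y)) μ)
    (Λ : ℝ → ℝ) (hΛ : ∀ η, Λ η = Real.log (∫ y, Real.exp (η * y) ∂μ))
    (x η₀ : ℝ) (hmax : ∀ η, η * x - Λ η ≤ η₀ * x - Λ η₀)
    (δ : ℝ) (hδ : 0 < δ) :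
    -(η₀ * x - Λ η₀) ≤ Filter.liminf (fun n : ℕ =>
      (1 / (n : ℝ)) * Real.log ((Measure.pi (fun _ : Fin n => μ))
        {ω : Fin n → ℝ | |(∑ i, ω i) / (n : ℝ) - x| ≤ δ}).toReal)
      Filter.atTop := by
  obtain rfl : Λ = cgf id μ := funext fun η ↦ by rw [hΛ]; rfl
  have hcont : Tendsto (fun ε ↦ -(η₀ * x - cgf id μ η₀ + |η₀| * ε)) (𝓝[>] 0)
      (𝓝 (-(η₀ * x - cgf id μ η₀))) := by
    have hc : Continuous fun ε : ℝ ↦ -(η₀ * x - cgf id μ η₀ + |η₀| * ε) := by fun_prop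
    simpa using (hc.tendsto 0).mono_left nhdsWithin_le_nhds
  refine le_of_tendsto hcont ?_
  filter_upwards [Ioo_mem_nhdsGT hδ] with ε hε
  exact neg_add_le_liminf_log_measureReal_pi μ hmgf hmax hε.1 hε.2.le
end

section
/- Suppose Y ~ N_n(β*, σ²I) and W ~ N_n(0, γ²I) independent of Y. Then the statistic β̂* = Y - (σ²/γ²)W is an unbiased estimator of β* and is independent of Y* = Y + W; consequently E[β̂* | A(Y+W) ≤ b] = β* for any matrix A and vector b with P(A Y* ≤ b) > 0, i.e., β̂* remains unbiased conditional on any selection event determined by Y*. -/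
/-!
Both `Y - (σ²/γ²) W` and `Y + W` are linear images of the independent Gaussian pair `(Y, W)`,
so the joint characteristic function of the two statistics at `(s, u)` is
`φ_Y(s + u) φ_W(u - c s)` with `c = σ²/γ²`. Expanding the Gaussian exponents, the only term
coupling `s` and `u` is `(c γ² - σ²) ⟪s, u⟫ = 0`, so the joint characteristic function factors
and the statistics are independent. The characteristic function of `Y - c W` is Gaussian with
mean `β`, which gives unbiasedness, and independence from `Y + W` leaves its law unchanged by
conditioning on any event `{Y + W ∈ s}`.
-/

open MeasureTheory ProbabilityTheory Complex
open scoped RealInnerProductSpace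

section GaussianDensity

variable {V : Type*} [NormedAddCommGroup V] [InnerProductSpace ℝ V] [FiniteDimensional ℝ V]
  [MeasurableSpace V] [BorelSpace V]

theorem charFun_withDensity_gaussian {C v : ℝ} (hC : 0 ≤ C) (hv : 0 < v) (m : V)
    (hμ : IsProbabilityMeasure ((volume : Measure V).withDensity
      fun x => ENNReal.ofReal (C * Real.exp (-‖x - m‖ ^ 2 / (2 * v))))) (t : V) :
    charFun ((volume : Measure V).withDensity
      fun x => ENNReal.ofReal (C * Real.exp (-‖x - m‖ ^ 2 / (2 * v)))) t =
      cexp (⟪t, m⟫ * I - v * ‖t‖ ^ 2 / 2) := by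
  set μ := (volume : Measure V).withDensity
      fun x => ENNReal.ofReal (C * Real.exp (-‖x - m‖ ^ 2 / (2 * v)))
  have hb : 0 < (1 / (2 * v) : ℂ).re := by
    rw [one_div, ← ofReal_ofNat, ← ofReal_mul, ← ofReal_inv, ofReal_re]; positivity
  -- The normalising constant `K` need not be computed: `charFun μ 0 = 1` forces `K = 1`.
  set K : ℂ := C * (Real.pi / (1 / (2 * v))) ^ (Module.finrank ℝ V / 2 : ℂ)
  have hshape : ∀ t, charFun μ t = K * cexp (⟪t, m⟫ * I - v * ‖t‖ ^ 2 / 2) := by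
    intro t
    calc charFun μ t
        = ∫ x, (C * Real.exp (-‖x - m‖ ^ 2 / (2 * v)) : ℝ) • cexp (⟪x, t⟫ * I) := by
          rw [charFun_apply, integral_withDensity_eq_integral_toReal_smul (by fun_prop)
            (.of_forall fun _ => ENNReal.ofReal_lt_top)]
          simp_rw [ENNReal.toReal_ofReal (by positivity : 0 ≤ C * Real.exp _)]
      _ = ∫ y, (C * cexp (⟪t, m⟫ * I)) * cexp (-(1 / (2 * v)) * ‖y‖ ^ 2 + I * ⟪t, y⟫) := by
          rw [← integral_add_right_eq_self _ m]
          congr 1 with y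
          simp only [add_sub_cancel_right, real_inner_comm t, inner_add_right, Complex.real_smul]
          push_cast
          rw [mul_assoc, ← Complex.exp_add, mul_assoc, ← Complex.exp_add]
          congr 2
          ring
      _ = K * cexp (⟪t, m⟫ * I - v * ‖t‖ ^ 2 / 2) := by
          have hexp : I ^ 2 * ‖t‖ ^ 2 / (4 * (1 / (2 * v))) = -(v * ‖t‖ ^ 2 / 2 : ℂ) := by
            rw [I_sq]; field_simp; ring
          rw [integral_const_mul, GaussianFourier.integral_cexp_neg_mul_sq_norm_add hb, hexp,
            sub_eq_add_neg, Complex.exp_add]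
          ring
  have hK : K = 1 := by simpa using (hshape 0).symm
  rw [hshape, hK, one_mul]

end GaussianDensity

theorem integral_id_eq_of_charFun_eq_gaussian {E : Type*} [NormedAddCommGroup E]
    [InnerProductSpace ℝ E] [SecondCountableTopology E] [CompleteSpace E] [MeasurableSpace E]
    [BorelSpace E]
    {μ : Measure E} [IsFiniteMeasure μ] {m : E} {v : ℝ} (hv : 0 ≤ v)
    (h : ∀ t, charFun μ t = cexp (⟪t, m⟫ * I - v * ‖t‖ ^ 2 / 2)) :
    ∫ x, x ∂μ = m := by
  have hf : (v • innerSL ℝ (E := E)).toBilinForm.IsPosSemidef :=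
    ⟨⟨fun x y => by
        change v * ⟪x, y⟫ = v * ⟪y, x⟫
        rw [real_inner_comm]⟩,
      ⟨fun x => by
        change 0 ≤ v * ⟪x, x⟫
        exact mul_nonneg hv real_inner_self_nonneg⟩⟩
  refine (gaussian_charFun_congr m _ hf fun t => ?_).1.symm
  change _ = cexp (⟪t, m⟫ * I - (v * ⟪t, t⟫ : ℝ) / 2)
  simp [h]

namespace ProbabilityTheory

variable {Ω : Type*} [MeasurableSpace Ω] {P : Measure Ω}

theorem IndepFun.map_cond_preimage_eq {F G : Type*} [MeasurableSpace F] [MeasurableSpace G]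
    [IsFiniteMeasure P] {X : Ω → F} {Z : Ω → G} (hX : Measurable X) (hZ : Measurable Z)
    (hXZ : IndepFun X Z P) {s : Set G} (hs : MeasurableSet s) (hPs : P (Z ⁻¹' s) ≠ 0) :
    (P[|Z ⁻¹' s]).map X = P.map X := by
  ext B hB
  rw [Measure.map_apply hX hB, Measure.map_apply hX hB, cond_apply (hZ hs), Set.inter_comm,
    hXZ.measure_inter_preimage_eq_mul _ _ hB hs, mul_comm, mul_assoc,
    ENNReal.mul_inv_cancel hPs (measure_ne_top P _), mul_one]

theorem IndepFun.integral_cond_preimage_eq {F G : Type*} [NormedAddCommGroup F]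
    [NormedSpace ℝ F] [MeasurableSpace F] [BorelSpace F] [SecondCountableTopology F]
    [MeasurableSpace G] [IsFiniteMeasure P]
    {X : Ω → F} {Z : Ω → G} (hX : Measurable X) (hZ : Measurable Z)
    (hXZ : IndepFun X Z P) {s : Set G} (hs : MeasurableSet s) (hPs : P (Z ⁻¹' s) ≠ 0) :
    ∫ ω, X ω ∂(P[|Z ⁻¹' s]) = ∫ ω, X ω ∂P := by
  calc ∫ ω, X ω ∂(P[|Z ⁻¹' s])
      = ∫ x, x ∂((P[|Z ⁻¹' s]).map X) :=
        (integral_map hX.aemeasurable aestronglyMeasurable_id).symm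
    _ = ∫ x, x ∂(P.map X) := by rw [hXZ.map_cond_preimage_eq hX hZ hs hPs]
    _ = ∫ ω, X ω ∂P := integral_map hX.aemeasurable aestronglyMeasurable_id

variable {E : Type*} [NormedAddCommGroup E] [InnerProductSpace ℝ E] [MeasurableSpace E]
  [BorelSpace E]

theorem charFun_map_eq_integral {X : Ω → E} (hX : AEMeasurable X P) (t : E) :
    charFun (P.map X) t = ∫ ω, cexp (⟪X ω, t⟫ * I) ∂P := by
  rw [charFun_apply, integral_map hX (by fun_prop)]

theorem IndepFun.integral_cexp_inner_add_inner {Y W : Ω → E} (hY : Measurable Y)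
    (hW : Measurable W) (hYW : IndepFun Y W P) (s u : E) :
    ∫ ω, cexp ((⟪Y ω, s⟫ + ⟪W ω, u⟫ : ℝ) * I) ∂P =
      charFun (P.map Y) s * charFun (P.map W) u := by
  simp only [ofReal_add, add_mul, Complex.exp_add]
  rw [hYW.integral_fun_comp_mul_comp (f := fun y => cexp (⟪y, s⟫ * I))
      (g := fun w => cexp (⟪w, u⟫ * I)) hY.aemeasurable hW.aemeasurable
      (by fun_prop) (by fun_prop),
    charFun_map_eq_integral hY.aemeasurable, charFun_map_eq_integral hW.aemeasurable]

variable [SecondCountableTopology E] {Y W : Ω → E}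

theorem IndepFun.charFun_map_sub_smul (hY : Measurable Y) (hW : Measurable W)
    (hYW : IndepFun Y W P) (c : ℝ) (s : E) :
    charFun (P.map fun ω => Y ω - c • W ω) s =
      charFun (P.map Y) s * charFun (P.map W) (-c • s) := by
  rw [← hYW.integral_cexp_inner_add_inner hY hW, charFun_map_eq_integral (by fun_prop)]
  congr with ω
  congr 3
  simp only [inner_sub_left, inner_smul_left, inner_smul_right, real_inner_comm,
    RCLike.conj_to_real]
  ring

theorem IndepFun.charFun_map_pair_sub_smul_add (hY : Measurable Y) (hW : Measurable W)
    (hYW : IndepFun Y W P) (c : ℝ) (t : WithLp 2 (E × E)) :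
    charFun (P.map fun ω => WithLp.toLp 2 (Y ω - c • W ω, Y ω + W ω)) t =
      charFun (P.map Y) (t.ofLp.1 + t.ofLp.2) * charFun (P.map W) (t.ofLp.2 - c • t.ofLp.1) := by
  rw [← hYW.integral_cexp_inner_add_inner hY hW, charFun_map_eq_integral (by fun_prop)]
  congr with ω
  congr 3
  simp only [WithLp.prod_inner_apply, inner_sub_left, inner_add_left, inner_smul_left,
    inner_add_right, inner_sub_right, inner_smul_right, real_inner_comm, RCLike.conj_to_real]
  ring

variable {β : E} {v w : ℝ}

theorem IndepFun.charFun_map_sub_smul_of_gaussian (hY : Measurable Y) (hW : Measurable W)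
    (hYW : IndepFun Y W P) (c : ℝ)
    (hYlaw : ∀ t, charFun (P.map Y) t = cexp (⟪t, β⟫ * I - v * ‖t‖ ^ 2 / 2))
    (hWlaw : ∀ t, charFun (P.map W) t = cexp (-(w * ‖t‖ ^ 2 / 2))) (s : E) :
    charFun (P.map fun ω => Y ω - c • W ω) s =
      cexp (⟪s, β⟫ * I - (v + c ^ 2 * w : ℝ) * ‖s‖ ^ 2 / 2) := by
  have hnorm : (‖-c • s‖ : ℂ) ^ 2 = c ^ 2 * ‖s‖ ^ 2 := by
    have : ‖-c • s‖ ^ 2 = c ^ 2 * ‖s‖ ^ 2 := by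
      rw [norm_smul, mul_pow, Real.norm_eq_abs, sq_abs, neg_sq]
    exact_mod_cast this
  rw [hYW.charFun_map_sub_smul hY hW, hYlaw, hWlaw, ← Complex.exp_add]
  congr 1
  push_cast
  linear_combination (-(w : ℂ) / 2) * hnorm

theorem IndepFun.charFun_map_add_of_gaussian [IsFiniteMeasure P] (hY : Measurable Y)
    (hW : Measurable W) (hYW : IndepFun Y W P)
    (hYlaw : ∀ t, charFun (P.map Y) t = cexp (⟪t, β⟫ * I - v * ‖t‖ ^ 2 / 2))
    (hWlaw : ∀ t, charFun (P.map W) t = cexp (-(w * ‖t‖ ^ 2 / 2))) (u : E) :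
    charFun (P.map fun ω => Y ω + W ω) u = cexp (⟪u, β⟫ * I - (v + w : ℝ) * ‖u‖ ^ 2 / 2) := by
  rw [hYW.charFun_map_fun_add_eq_mul hY.aemeasurable hW.aemeasurable, Pi.mul_apply, hYlaw,
    hWlaw, ← Complex.exp_add]
  congr 1
  push_cast
  ring

theorem IndepFun.indepFun_sub_smul_add_of_gaussian [CompleteSpace E] [IsFiniteMeasure P]
    (hY : Measurable Y) (hW : Measurable W) (hYW : IndepFun Y W P) {c : ℝ}
    (hYlaw : ∀ t, charFun (P.map Y) t = cexp (⟪t, β⟫ * I - v * ‖t‖ ^ 2 / 2))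
    (hWlaw : ∀ t, charFun (P.map W) t = cexp (-(w * ‖t‖ ^ 2 / 2))) (hc : c * w = v) :
    IndepFun (fun ω => Y ω - c • W ω) (fun ω => Y ω + W ω) P := by
  rw [indepFun_iff_charFun_prod (by fun_prop) (by fun_prop)]
  intro t
  rw [hYW.charFun_map_pair_sub_smul_add hY hW, hYlaw, hWlaw,
    hYW.charFun_map_sub_smul_of_gaussian hY hW c hYlaw hWlaw,
    hYW.charFun_map_add_of_gaussian hY hW hYlaw hWlaw, ← Complex.exp_add, ← Complex.exp_add]
  obtain ⟨s, u⟩ := t.ofLp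
  have hadd : (‖s + u‖ : ℂ) ^ 2 = ‖s‖ ^ 2 + 2 * ⟪s, u⟫ + ‖u‖ ^ 2 := by
    exact_mod_cast norm_add_sq_real s u
  have hsub : (‖u - c • s‖ : ℂ) ^ 2 = ‖u‖ ^ 2 - 2 * c * ⟪s, u⟫ + c ^ 2 * ‖s‖ ^ 2 := by
    have : ‖u - c • s‖ ^ 2 = ‖u‖ ^ 2 - 2 * c * ⟪s, u⟫ + c ^ 2 * ‖s‖ ^ 2 := by
      rw [norm_sub_sq_real, norm_smul, inner_smul_right, real_inner_comm, Real.norm_eq_abs,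
        mul_pow, sq_abs]
      ring
    exact_mod_cast this
  congr 1
  push_cast [inner_add_left]
  linear_combination (-(v : ℂ) / 2) * hadd + (-(w : ℂ) / 2) * hsub +
    (⟪s, u⟫ : ℂ) * (by exact_mod_cast hc : (c : ℂ) * w = v)

end ProbabilityTheory

/-- With `Y ~ N_n(β*, σ²I)` and independent randomization `W ~ N_n(0, γ²I)`, the statistic
`β̂* = Y - (σ²/γ²)W` is unbiased for `β*`, independent of `Y* = Y + W`, and remains
unbiased conditional on any selection event `{A Y* ≤ b}` of positive probability. -/
theorem stmt16 {n : ℕ} {Ω : Type*} [MeasurableSpace Ω] (P : Measure Ω)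
    [IsProbabilityMeasure P]
    (Y W : Ω → EuclideanSpace ℝ (Fin n)) (hY : Measurable Y) (hW : Measurable W)
    (β : EuclideanSpace ℝ (Fin n)) (σ γ : ℝ) (hσ : 0 < σ) (hγ : 0 < γ)
    (hYlaw : Measure.map Y P = volume.withDensity (fun x => ENNReal.ofReal
      ((2 * Real.pi * σ ^ 2) ^ (-(n : ℝ) / 2) * Real.exp (-‖x - β‖ ^ 2 / (2 * σ ^ 2)))))
    (hWlaw : Measure.map W P = volume.withDensity (fun x => ENNReal.ofReal
      ((2 * Real.pi * γ ^ 2) ^ (-(n : ℝ) / 2) * Real.exp (-‖x‖ ^ 2 / (2 * γ ^ 2)))))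
    (hindep : IndepFun Y W P) :
    (∫ ω, (Y ω - (σ ^ 2 / γ ^ 2) • W ω) ∂P = β) ∧
    IndepFun (fun ω => Y ω - (σ ^ 2 / γ ^ 2) • W ω) (fun ω => Y ω + W ω) P ∧
    (∀ (m : ℕ) (A : Matrix (Fin m) (Fin n) ℝ) (b : Fin m → ℝ),
      0 < P {ω | ∀ i, A.mulVec (fun j => (Y ω + W ω) j) i ≤ b i} →
      ∫ ω, (Y ω - (σ ^ 2 / γ ^ 2) • W ω)
        ∂(P[|{ω | ∀ i, A.mulVec (fun j => (Y ω + W ω) j) i ≤ b i}]) = β) := by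
  have hYcf : ∀ t, charFun (P.map Y) t = cexp (⟪t, β⟫ * I - (σ ^ 2 : ℝ) * ‖t‖ ^ 2 / 2) := by
    rw [hYlaw]
    exact charFun_withDensity_gaussian (by positivity) (by positivity) β
      (hYlaw ▸ Measure.isProbabilityMeasure_map hY.aemeasurable)
  have hWlaw₀ : P.map W = volume.withDensity (fun x => ENNReal.ofReal
      ((2 * Real.pi * γ ^ 2) ^ (-(n : ℝ) / 2) * Real.exp (-‖x - 0‖ ^ 2 / (2 * γ ^ 2)))) := by
    simpa only [sub_zero] using hWlaw
  have hWcf : ∀ t, charFun (P.map W) t = cexp (-((γ ^ 2 : ℝ) * ‖t‖ ^ 2 / 2)) := by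
    intro t
    rw [hWlaw₀, charFun_withDensity_gaussian (by positivity) (by positivity) 0
      (hWlaw₀ ▸ Measure.isProbabilityMeasure_map hW.aemeasurable)]
    simp
  have hc : σ ^ 2 / γ ^ 2 * γ ^ 2 = σ ^ 2 := by field_simp
  have hindepStat := hindep.indepFun_sub_smul_add_of_gaussian hY hW hYcf hWcf hc
  have hmean : ∫ x, x ∂(P.map fun ω => Y ω - (σ ^ 2 / γ ^ 2) • W ω) = β :=
    integral_id_eq_of_charFun_eq_gaussian (by positivity)
      (hindep.charFun_map_sub_smul_of_gaussian hY hW _ hYcf hWcf)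
  have hunbiased : ∫ ω, (Y ω - (σ ^ 2 / γ ^ 2) • W ω) ∂P = β := by
    rwa [integral_map (f := fun x => x) (by fun_prop) (by fun_prop)] at hmean
  refine ⟨hunbiased, hindepStat, fun m A b hpos => ?_⟩
  have hsel : MeasurableSet
      {v : EuclideanSpace ℝ (Fin n) | ∀ i, A.mulVec (fun j => v j) i ≤ b i} := by
    measurability
  exact (hindepStat.integral_cond_preimage_eq (by fun_prop) (by fun_prop) hsel hpos.ne').trans
    hunbiased
end
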